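/- The moment generating function of X ~ BG(μ, σ, δ) at t < 0 is M_X(t) = e^{μt} Γ(1−σt) [2 − 2μδ + μ²δ² + 2σδ(1−μδ)ψ(1−σt) + (σ²δ²/Γ(1−σt)) Γ''(1−σt)] / [1 + δ²σ²π²/6 + (δμ + δσγ − 1)²], where ψ = Γ'/Γ is the digamma function. -/

import Mathlib

open MeasureTheory Real

/-- The Gumbel density with location `μ` and scale `σ`. -/
noncomputable def gumbelPDF (μ σ x : ℝ) : ℝ :=
  (1 / σ) * Real.exp (-((x - μ) / σ) - Real.exp (-((x - μ) / σ)))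

/-- The bimodal Gumbel density. -/
noncomputable def bgPDF (μ σ δ x : ℝ) : ℝ :=
  ((1 - δ * x) ^ 2 + 1) * gumbelPDF μ σ x /
    (1 + δ ^ 2 * σ ^ 2 * π ^ 2 / 6 +
      (δ * μ + δ * σ * Real.eulerMascheroniConstant - 1) ^ 2)

/-- The digamma function `ψ = Γ'/Γ`. -/
noncomputable def digamma (x : ℝ) : ℝ := deriv Real.Gamma x / Real.Gamma x

/-! The substitution `x = μ - σ log u` turns the Gumbel density into `e^{-u} du` and `e^{tx}`
into `e^{μt} u^{-σt}`, while the weight `(1 - δx)² + 1` becomes a quadratic polynomial in `log u`.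
So the moment generating function is a combination of the integrals
`∫₀^∞ u^{s-1} e^{-u} (log u)^n du`, `n ≤ 2`, at `s = 1 - σt > 0`, and these are `Γ⁽ⁿ⁾(s)`:
differentiating the Mellin transform of `e^{-u} (log u)^n` under the integral sign multiplies the
integrand by `log u`. -/

open Set Filter Asymptotics
open scoped Topology

noncomputable def expNegMulLogPow (n : ℕ) (u : ℝ) : ℝ := Real.exp (-u) * Real.log u ^ n

noncomputable def gammaLogMoment (n : ℕ) (s : ℝ) : ℝ :=
  ∫ u in Ioi (0 : ℝ), u ^ (s - 1) * expNegMulLogPow n u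

lemma log_smul_expNegMulLogPow (n : ℕ) :
    (fun u => Real.log u • expNegMulLogPow n u) = expNegMulLogPow (n + 1) := by
  ext u
  simp only [expNegMulLogPow, smul_eq_mul]
  ring

lemma continuousOn_expNegMulLogPow (n : ℕ) : ContinuousOn (expNegMulLogPow n) (Ioi 0) := by
  unfold expNegMulLogPow
  fun_prop (disch := grind)

lemma expNegMulLogPow_isBigO_atTop (n : ℕ) (a : ℝ) :
    expNegMulLogPow n =O[atTop] (· ^ (-a)) := by
  induction n generalizing a with
  | zero =>
    convert (isLittleO_exp_neg_mul_rpow_atTop zero_lt_one (-a)).isBigO using 1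
    ext u
    simp [expNegMulLogPow]
  | succ n ih =>
    rw [← log_smul_expNegMulLogPow]
    exact isBigO_rpow_top_log_smul (lt_add_one a) (ih (a + 1))

lemma expNegMulLogPow_isBigO_nhdsGT_zero (n : ℕ) {b : ℝ} (hb : 0 < b) :
    expNegMulLogPow n =O[𝓝[>] 0] (· ^ (-b)) := by
  induction n generalizing b with
  | zero =>
    refine IsBigO.of_bound 1 ?_
    filter_upwards [Ioo_mem_nhdsGT one_pos] with u ⟨hu0, hu1⟩
    have hle : 1 ≤ u ^ (-b) := one_le_rpow_of_pos_of_le_one_of_nonpos hu0 hu1.le (by linarith)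
    simp only [expNegMulLogPow, pow_zero, mul_one, norm_eq_abs, abs_exp, one_mul,
      abs_of_pos (rpow_pos_of_pos hu0 _)]
    exact (exp_le_one_iff.mpr (by linarith)).trans hle
  | succ n ih =>
    rw [← log_smul_expNegMulLogPow]
    exact isBigO_rpow_zero_log_smul (half_lt_self hb) (ih (half_pos hb))

lemma integrableOn_rpow_mul_expNegMulLogPow (n : ℕ) {s : ℝ} (hs : 0 < s) :
    IntegrableOn (fun u => u ^ (s - 1) * expNegMulLogPow n u) (Ioi 0) :=
  mellin_convergent_of_isBigO_scalar
    ((continuousOn_expNegMulLogPow n).locallyIntegrableOn measurableSet_Ioi)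
    (expNegMulLogPow_isBigO_atTop n (s + 1)) (lt_add_one s)
    (expNegMulLogPow_isBigO_nhdsGT_zero n (half_pos hs)) (half_lt_self hs)

lemma mellin_ofReal (g : ℝ → ℝ) (s : ℝ) :
    mellin (fun u => (g u : ℂ)) s = ((∫ u in Ioi (0 : ℝ), u ^ (s - 1) * g u : ℝ) : ℂ) := by
  rw [mellin, ← integral_complex_ofReal]
  refine setIntegral_congr_fun measurableSet_Ioi fun u hu => ?_
  simp [Complex.ofReal_cpow (le_of_lt hu)]

lemma hasDerivAt_gammaLogMoment (n : ℕ) {s : ℝ} (hs : 0 < s) :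
    HasDerivAt (gammaLogMoment n) (gammaLogMoment (n + 1) s) s := by
  have hlog : (fun u => Real.log u • (expNegMulLogPow n u : ℂ))
      = fun u => (expNegMulLogPow (n + 1) u : ℂ) := by
    ext u
    simp [← log_smul_expNegMulLogPow, Complex.real_smul]
  have hmellin := (mellin_hasDerivAt_of_isBigO_rpow (f := fun u => (expNegMulLogPow n u : ℂ))
    (s := s) ((Complex.continuous_ofReal.comp_continuousOn (continuousOn_expNegMulLogPow n))
      |>.locallyIntegrableOn measurableSet_Ioi)
    (Complex.isBigO_ofReal_left.mpr (expNegMulLogPow_isBigO_atTop n (s + 1))) (by simp)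
    (Complex.isBigO_ofReal_left.mpr (expNegMulLogPow_isBigO_nhdsGT_zero n (half_pos hs)))
    (by simpa using half_lt_self hs)).2
  rw [hlog] at hmellin
  have hre :
      gammaLogMoment n = fun x : ℝ => (mellin (fun u => (expNegMulLogPow n u : ℂ)) x).re := by
    ext x
    rw [mellin_ofReal, Complex.ofReal_re, gammaLogMoment]
  simpa [hre, mellin_ofReal, gammaLogMoment] using hmellin.real_of_complex

lemma gammaLogMoment_zero {s : ℝ} (hs : 0 < s) : gammaLogMoment 0 s = Gamma s := by
  rw [Gamma_eq_integral hs, gammaLogMoment]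
  refine setIntegral_congr_fun measurableSet_Ioi fun u _ => ?_
  simp [expNegMulLogPow, mul_comm]

theorem iteratedDeriv_Gamma_eq_gammaLogMoment (n : ℕ) {s : ℝ} (hs : 0 < s) :
    iteratedDeriv n Gamma s = gammaLogMoment n s := by
  induction n generalizing s with
  | zero => rw [iteratedDeriv_zero, gammaLogMoment_zero hs]
  | succ n ih =>
    have hev : iteratedDeriv n Gamma =ᶠ[𝓝 s] gammaLogMoment n :=
      eventually_of_mem (Ioi_mem_nhds hs) fun x hx => ih hx
    rw [iteratedDeriv_succ, hev.deriv_eq, (hasDerivAt_gammaLogMoment n hs).deriv]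

theorem integral_rpow_mul_exp_neg_mul_quadratic_log (a b c : ℝ) {s : ℝ} (hs : 0 < s) :
    ∫ u in Ioi (0 : ℝ), u ^ (s - 1) * Real.exp (-u) * (a + b * Real.log u + c * Real.log u ^ 2)
      = a * Gamma s + b * deriv Gamma s + c * iteratedDeriv 2 Gamma s := by
  have hsplit : ∀ u, u ^ (s - 1) * Real.exp (-u) * (a + b * Real.log u + c * Real.log u ^ 2)
      = a * (u ^ (s - 1) * expNegMulLogPow 0 u) + b * (u ^ (s - 1) * expNegMulLogPow 1 u)
        + c * (u ^ (s - 1) * expNegMulLogPow 2 u) := fun u => by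
    simp only [expNegMulLogPow]
    ring
  have hint (n : ℕ) (d : ℝ) := (integrableOn_rpow_mul_expNegMulLogPow n hs).const_mul d
  simp_rw [hsplit]
  rw [integral_add (by exact (hint 0 a).add (hint 1 b)) (hint 2 c),
    integral_add (hint 0 a) (hint 1 b), integral_const_mul, integral_const_mul,
    integral_const_mul, ← iteratedDeriv_one,
    iteratedDeriv_Gamma_eq_gammaLogMoment 1 hs, iteratedDeriv_Gamma_eq_gammaLogMoment 2 hs,
    ← gammaLogMoment_zero hs]
  rfl

lemma gumbelPDF_sub_mul_log {μ σ : ℝ} (hσ : 0 < σ) {u : ℝ} (hu : 0 < u) :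
    gumbelPDF μ σ (μ - σ * Real.log u) = u * Real.exp (-u) / σ := by
  have harg : -((μ - σ * Real.log u - μ) / σ) = Real.log u := by
    field_simp
    ring
  rw [gumbelPDF, harg, Real.exp_sub, Real.exp_log hu, Real.exp_neg]
  ring

theorem integral_mul_gumbelPDF {μ σ : ℝ} (g : ℝ → ℝ) (hσ : 0 < σ) :
    ∫ x, g x * gumbelPDF μ σ x = ∫ u in Ioi (0 : ℝ), g (μ - σ * Real.log u) * Real.exp (-u) := by
  have hderiv : ∀ u ∈ Ioi (0 : ℝ),
      HasDerivWithinAt (fun u => μ - σ * Real.log u) (-(σ * u⁻¹)) (Ioi 0) u := fun u hu =>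
    (((hasDerivAt_log (ne_of_gt hu)).const_mul σ).const_sub μ).hasDerivWithinAt
  have hinj : InjOn (fun u => μ - σ * Real.log u) (Ioi 0) := fun u hu v hv huv =>
    Real.log_injOn_pos hu hv (mul_left_cancel₀ hσ.ne' (sub_right_injective huv))
  have himage : (fun u => μ - σ * Real.log u) '' Ioi 0 = univ := by
    refine eq_univ_of_forall fun x => ⟨Real.exp ((μ - x) / σ), Real.exp_pos _, ?_⟩
    simp only [Real.log_exp]
    field_simp
    ring
  rw [← setIntegral_univ, ← himage,
    integral_image_eq_integral_abs_deriv_smul measurableSet_Ioi hderiv hinj]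
  refine setIntegral_congr_fun measurableSet_Ioi fun u (hu : 0 < u) => ?_
  rw [smul_eq_mul, abs_neg, abs_of_pos (by positivity), gumbelPDF_sub_mul_log hσ hu]
  field_simp

lemma bg_mgf_integrand_sub_mul_log (μ σ δ t : ℝ) {u : ℝ} (hu : 0 < u) :
    Real.exp (t * (μ - σ * Real.log u)) * ((1 - δ * (μ - σ * Real.log u)) ^ 2 + 1)
        * Real.exp (-u)
      = Real.exp (μ * t) * (u ^ (1 - σ * t - 1) * Real.exp (-u)
          * ((1 - δ * μ) ^ 2 + 1 + 2 * σ * δ * (1 - δ * μ) * Real.log u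
            + σ ^ 2 * δ ^ 2 * Real.log u ^ 2)) := by
  have hexp : Real.exp (t * (μ - σ * Real.log u))
      = Real.exp (μ * t) * Real.exp (Real.log u * (1 - σ * t - 1)) := by
    rw [← Real.exp_add]
    ring_nf
  rw [hexp, rpow_def_of_pos hu]
  ring

theorem bg_mgf (μ σ δ t : ℝ) (hσ : 0 < σ) (ht : t < 0) :
    ∫ x : ℝ, Real.exp (t * x) * bgPDF μ σ δ x
      = Real.exp (μ * t) * Real.Gamma (1 - σ * t) *
          (2 - 2 * μ * δ + μ ^ 2 * δ ^ 2
            + 2 * σ * δ * (1 - μ * δ) * digamma (1 - σ * t)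
            + (σ ^ 2 * δ ^ 2 / Real.Gamma (1 - σ * t)) *
                iteratedDeriv 2 Real.Gamma (1 - σ * t)) /
        (1 + δ ^ 2 * σ ^ 2 * π ^ 2 / 6 +
          (δ * μ + δ * σ * Real.eulerMascheroniConstant - 1) ^ 2) := by
  have hs : 0 < 1 - σ * t := by nlinarith
  set s := 1 - σ * t
  have hΓ : Gamma s ≠ 0 := (Gamma_pos_of_pos hs).ne'
  simp_rw [bgPDF, mul_div_assoc', ← mul_assoc]
  rw [integral_div, integral_mul_gumbelPDF (fun x => Real.exp (t * x) * ((1 - δ * x) ^ 2 + 1)) hσ,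
    setIntegral_congr_fun measurableSet_Ioi fun u hu => bg_mgf_integrand_sub_mul_log μ σ δ t hu,
    integral_const_mul, integral_rpow_mul_exp_neg_mul_quadratic_log _ _ _ hs, digamma]
  field_simp
  ring
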